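/- Let G be a group with subgroups K ≤ H ≤ G such that the index [G:H] is finite and the normal closure of K in G is contained in H. Then for any commutative ring F, the tower of group algebras F[G] ⊇ F[H] ⊇ F[K] is right depth three: there exist γ_i ∈ End_{F[H]}(F[G])_{F[K]} and u_i ∈ (F[G] ⊗_{F[H]} F[G])^{F[K]} with x ⊗ y = Σ_i x γ_i(y) u_i for all x, y ∈ F[G]. -/

import Mathlib

open scoped BigOperators

section BTCore

variable {R M N P : Type*} [AddCommGroup M] [AddCommGroup N] [AddCommGroup P]

/-- Relations defining the balanced tensor product of `M` and `N` over the
"scalars" `R`, where `R` acts on the right of `M` via `rho` and on the left of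
`N` via `lam`. -/
inductive BTRel (rho : R → M →+ M) (lam : R → N →+ N) :
    FreeAbelianGroup (M × N) → FreeAbelianGroup (M × N) → Prop
  | addl (m m' : M) (n : N) :
      BTRel rho lam (FreeAbelianGroup.of (m + m', n))
        (FreeAbelianGroup.of (m, n) + FreeAbelianGroup.of (m', n))
  | addr (m : M) (n n' : N) :
      BTRel rho lam (FreeAbelianGroup.of (m, n + n'))
        (FreeAbelianGroup.of (m, n) + FreeAbelianGroup.of (m, n'))
  | bal (r : R) (m : M) (n : N) :
      BTRel rho lam (FreeAbelianGroup.of (rho r m, n))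
        (FreeAbelianGroup.of (m, lam r n))

/-- The balanced tensor product `M ⊗_R N`. -/
def BT (rho : R → M →+ M) (lam : R → N →+ N) : Type _ :=
  (addConGen (BTRel rho lam)).Quotient

namespace BT

variable {rho : R → M →+ M} {lam : R → N →+ N}

instance : AddGroup (BT rho lam) :=
  inferInstanceAs (AddGroup (addConGen (BTRel rho lam)).Quotient)

instance : AddCommGroup (BT rho lam) :=
  { (inferInstance : AddGroup (BT rho lam)) with
    add_comm := fun a b => by
      refine AddCon.induction_on₂ a b fun x y => ?_
      change ((x + y : FreeAbelianGroup (M × N)) :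
        (addConGen (BTRel rho lam)).Quotient) = ((y + x : FreeAbelianGroup (M × N)) : _)
      rw [add_comm] }

/-- The canonical generator `m ⊗ n`. -/
def mk (rho : R → M →+ M) (lam : R → N →+ N) (m : M) (n : N) : BT rho lam :=
  ((FreeAbelianGroup.of (m, n) : FreeAbelianGroup (M × N)) :
    (addConGen (BTRel rho lam)).Quotient)

lemma mk_rel {x y : FreeAbelianGroup (M × N)} (h : BTRel rho lam x y) :
    (x : (addConGen (BTRel rho lam)).Quotient) = (y : _) :=
  (AddCon.eq _).2 (AddConGen.Rel.of _ _ h)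

lemma mk_add_left (m m' : M) (n : N) :
    mk rho lam (m + m') n = mk rho lam m n + mk rho lam m' n := by
  have := mk_rel (BTRel.addl m m' n (rho := rho) (lam := lam))
  exact this

lemma mk_add_right (m : M) (n n' : N) :
    mk rho lam m (n + n') = mk rho lam m n + mk rho lam m n' := by
  have := mk_rel (BTRel.addr m n n' (rho := rho) (lam := lam))
  exact this

lemma mk_bal (r : R) (m : M) (n : N) :
    mk rho lam (rho r m) n = mk rho lam m (lam r n) :=
  mk_rel (BTRel.bal r m n)

/-- Lift a biadditive balanced map to the balanced tensor product. -/
def lift (rho : R → M →+ M) (lam : R → N →+ N) (φ : M → N → P)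
    (h1 : ∀ m m' n, φ (m + m') n = φ m n + φ m' n)
    (h2 : ∀ m n n', φ m (n + n') = φ m n + φ m n')
    (h3 : ∀ r m n, φ (rho r m) n = φ m (lam r n)) : BT rho lam →+ P :=
  AddCon.lift _ (FreeAbelianGroup.lift fun p => φ p.1 p.2)
    ((AddCon.addConGen_le).2 (by
      rintro x y h
      cases h with
      | addl m m' n => simp [AddCon.ker_rel, FreeAbelianGroup.lift_apply_of, h1]
      | addr m n n' => simp [AddCon.ker_rel, FreeAbelianGroup.lift_apply_of, h2]
      | bal r m n => simp [AddCon.ker_rel, FreeAbelianGroup.lift_apply_of, h3]))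

@[simp] lemma lift_mk (φ : M → N → P) (h1 h2 h3) (m : M) (n : N) :
    lift rho lam φ h1 h2 h3 (mk rho lam m n) = φ m n := by
  show (addConGen (BTRel rho lam)).lift _ _ ((FreeAbelianGroup.of (m, n) :
    FreeAbelianGroup (M × N)) : (addConGen (BTRel rho lam)).Quotient) = _
  rw [AddCon.lift_coe, FreeAbelianGroup.lift_apply_of]

/-- Induction principle for the balanced tensor product. -/
protected lemma ind {motive : BT rho lam → Prop} (zero : motive 0)
    (mk' : ∀ m n, motive (mk rho lam m n)) (neg : ∀ x, motive x → motive (-x))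
    (add : ∀ x y, motive x → motive y → motive (x + y)) : ∀ x : BT rho lam, motive x := by
  intro x
  refine AddCon.induction_on x fun z => ?_
  induction z using FreeAbelianGroup.induction_on with
  | zero => exact zero
  | of p => exact mk' p.1 p.2
  | neg p h =>
      have : ((-FreeAbelianGroup.of p : FreeAbelianGroup (M × N)) :
          (addConGen (BTRel rho lam)).Quotient) = -(mk rho lam p.1 p.2) := rfl
      rw [this]; exact neg _ (mk' p.1 p.2)
  | add x y hx hy =>
      have : ((x + y : FreeAbelianGroup (M × N)) :
          (addConGen (BTRel rho lam)).Quotient) = (x : _) + (y : _) := rfl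
      rw [this]; exact add _ _ hx hy

lemma hom_ext {f g : BT rho lam →+ P}
    (h : ∀ m n, f (mk rho lam m n) = g (mk rho lam m n)) : f = g := by
  ext x
  refine BT.ind (motive := fun x => f x = g x) ?_ ?_ ?_ ?_ x
  · simp
  · exact h
  · intro y hy; simp [hy]
  · intro y z hy hz; simp [hy, hz]

end BT

end BTCore

section Tensor

variable {B A C P : Type*} [Ring B] [Ring A] [Ring C] [AddCommGroup P]

/-- The tensor product `A ⊗_B A` relative to a ring homomorphism `g : B →+* A`. -/
def Tsr (g : B →+* A) : Type _ :=
  BT (fun b => AddMonoidHom.mulRight (g b)) (fun b => AddMonoidHom.mulLeft (g b))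

instance (g : B →+* A) : AddCommGroup (Tsr g) := inferInstanceAs (AddCommGroup (BT _ _))

namespace Tsr

variable (g : B →+* A)

/-- The generator `x ⊗_B y` of `Tsr g`. -/
def tmk (x y : A) : Tsr g := BT.mk _ _ x y

lemma tmk_add_left (x x' y : A) : tmk g (x + x') y = tmk g x y + tmk g x' y :=
  BT.mk_add_left x x' y

lemma tmk_add_right (x y y' : A) : tmk g x (y + y') = tmk g x y + tmk g x y' :=
  BT.mk_add_right x y y'

lemma tmk_bal (x : A) (b : B) (y : A) : tmk g (x * g b) y = tmk g x (g b * y) :=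
  BT.mk_bal b x y

/-- Lift a biadditive `B`-balanced map `A × A → P` to `Tsr g`. -/
def tlift (φ : A → A → P)
    (h1 : ∀ x x' y, φ (x + x') y = φ x y + φ x' y)
    (h2 : ∀ x y y', φ x (y + y') = φ x y + φ x y')
    (h3 : ∀ x b y, φ (x * g b) y = φ x (g b * y)) : Tsr g →+ P :=
  BT.lift _ _ φ h1 h2 (fun r m n => h3 m r n)

@[simp] lemma tlift_mk (φ : A → A → P) (h1 h2 h3) (x y : A) :
    tlift g φ h1 h2 h3 (tmk g x y) = φ x y :=
  BT.lift_mk φ h1 h2 _ x y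

lemma thom_ext {g : B →+* A} {f f' : Tsr g →+ P}
    (h : ∀ x y, f (tmk g x y) = f' (tmk g x y)) : f = f' :=
  BT.hom_ext h

/-- Left multiplication by `a ∈ A` on the first tensorand. -/
def lmul (a : A) : Tsr g →+ Tsr g :=
  tlift g (fun x y => tmk g (a * x) y)
    (fun x x' y => by rw [mul_add, tmk_add_left])
    (fun x y y' => by rw [tmk_add_right])
    (fun x b y => by rw [← mul_assoc, tmk_bal])

@[simp] lemma lmul_mk (a x y : A) : lmul g a (tmk g x y) = tmk g (a * x) y :=
  tlift_mk g _ _ _ _ x y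

/-- Right multiplication by `a ∈ A` on the second tensorand. -/
def rmul (a : A) : Tsr g →+ Tsr g :=
  tlift g (fun x y => tmk g x (y * a))
    (fun x x' y => by rw [tmk_add_left])
    (fun x y y' => by rw [add_mul, tmk_add_right])
    (fun x b y => by rw [tmk_bal, mul_assoc])

@[simp] lemma rmul_mk (a x y : A) : rmul g a (tmk g x y) = tmk g x (y * a) :=
  tlift_mk g _ _ _ _ x y

lemma lmul_lmul (a a' : A) (p : Tsr g) : lmul g a (lmul g a' p) = lmul g (a * a') p := by
  have : ((lmul g a).comp (lmul g a')) = lmul g (a * a') :=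
    thom_ext fun x y => by simp [mul_assoc]
  exact DFunLike.congr_fun this p

lemma rmul_rmul (a a' : A) (p : Tsr g) : rmul g a (rmul g a' p) = rmul g (a' * a) p := by
  have : ((rmul g a).comp (rmul g a')) = rmul g (a' * a) :=
    thom_ext fun x y => by simp [mul_assoc]
  exact DFunLike.congr_fun this p

lemma lmul_rmul (a a' : A) (p : Tsr g) : lmul g a (rmul g a' p) = rmul g a' (lmul g a p) := by
  have : ((lmul g a).comp (rmul g a')) = (rmul g a').comp (lmul g a) :=
    thom_ext fun x y => by simp
  exact DFunLike.congr_fun this p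

lemma lmul_add_smul (a a' : A) (p : Tsr g) :
    lmul g (a + a') p = lmul g a p + lmul g a' p := by
  have : lmul g (a + a') = lmul g a + lmul g a' :=
    thom_ext fun x y => by simp [add_mul, tmk_add_left]
  rw [this]; rfl

lemma rmul_add_smul (a a' : A) (p : Tsr g) :
    rmul g (a + a') p = rmul g a p + rmul g a' p := by
  have : rmul g (a + a') = rmul g a + rmul g a' :=
    thom_ext fun x y => by simp [mul_add, tmk_add_right]
  rw [this]; rfl

/-- The multiplication map `μ : A ⊗_B A → A`. -/
def mulmap : Tsr g →+ A :=
  tlift g (fun x y => x * y) (fun x x' y => by rw [add_mul])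
    (fun x y y' => by rw [mul_add]) (fun x b y => by rw [mul_assoc])

@[simp] lemma mulmap_mk (x y : A) : mulmap g (tmk g x y) = x * y := tlift_mk g _ _ _ _ x y

end Tsr

section TowerDefs

open Tsr

variable (g : B →+* A) (hC : C →+* A)

/-- `p ∈ (A ⊗_B A)^C` : the `C`-centralizer condition, where `C` maps to `A` via `hC`. -/
def TCent (p : Tsr g) : Prop := ∀ c : C, lmul g (hC c) p = rmul g (hC c) p

/-- `α ∈ End_B A_C` : additive endomorphisms of `A` that are left `B`-linear
(via `g`) and right `C`-linear (via `hC`). -/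
def EndBAC (α : A →+ A) : Prop :=
  (∀ (b : B) (x : A), α (g b * x) = g b * α x) ∧
  ∀ (x : A) (c : C), α (x * hC c) = α x * hC c

/-- The tower is right depth three: `A ⊗_B A` is isomorphic, as `A`-`C`-bimodules,
to a direct summand of `A^n` for some `n`. Here the left `A`-action and right
`C`-action on `A^n` are componentwise, and on `Tsr g` they are `lmul` and `rmul`. -/
def IsRightD3 : Prop :=
  ∃ (n : ℕ) (π : (Fin n → A) →+ Tsr g) (σ : Tsr g →+ (Fin n → A)),
    (∀ (a : A) (v : Fin n → A), π (fun i => a * v i) = lmul g a (π v)) ∧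
    (∀ (c : C) (v : Fin n → A), π (fun i => v i * hC c) = rmul g (hC c) (π v)) ∧
    (∀ (a : A) (p : Tsr g) (i : Fin n), σ (lmul g a p) i = a * σ p i) ∧
    (∀ (c : C) (p : Tsr g) (i : Fin n), σ (rmul g (hC c) p) i = σ p i * hC c) ∧
    (∀ p : Tsr g, π (σ p) = p)

end TowerDefs

end Tensor

open Tsr

/-!
Since every conjugate of `K` lies in `H`, each double coset `H g K` is the right coset `H g`.
Hence the projections `γ_ω` of `F[G]` onto the span of the right cosets `H r_ω` are left
`F[H]`-linear and right `F[K]`-linear, and `u_ω = r_ω⁻¹ ⊗ r_ω` is `F[K]`-central, because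
`k r⁻¹ ⊗ r = r⁻¹ (r k r⁻¹) ⊗ r = r⁻¹ ⊗ r k` with `r k r⁻¹ ∈ H`. For `y` supported on `H r` the
element `y r⁻¹` lies in `F[H]`, so `x ⊗ y = x y r⁻¹ ⊗ r`; summing over the finitely many cosets
gives `x ⊗ y = ∑ x γ_ω(y) u_ω`.
-/

namespace Tsr

variable {B A : Type*} [Ring B] [Ring A] (g : B →+* A)

lemma tmk_zero_left (y : A) : tmk g 0 y = 0 := by
  simpa using tmk_add_left g 0 0 y

lemma tmk_zero_right (x : A) : tmk g x 0 = 0 := by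
  simpa using tmk_add_right g x 0 0

lemma tmk_sum_right {ι : Type*} (s : Finset ι) (x : A) (y : ι → A) :
    tmk g x (∑ i ∈ s, y i) = ∑ i ∈ s, tmk g x (y i) :=
  map_sum (AddMonoidHom.mk' (tmk g x) (tmk_add_right g x)) y s

lemma lmul_zero : lmul g (0 : A) = 0 :=
  thom_ext fun x y => by simp [tmk_zero_left]

lemma rmul_zero : rmul g (0 : A) = 0 :=
  thom_ext fun x y => by simp [tmk_zero_right]

end Tsr

namespace QuotientGroup

variable {G : Type*} [Group G] {H : Subgroup G}

lemma mk_rightRel_mul_left {h : G} (hh : h ∈ H) (s : G) :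
    Quotient.mk (rightRel H) (h * s) = Quotient.mk (rightRel H) s :=
  Quotient.sound (rightRel_apply.mpr (by simpa using H.inv_mem hh))

lemma mk_rightRel_mul_right {s k : G} (hk : s * k * s⁻¹ ∈ H) :
    Quotient.mk (rightRel H) (s * k) = Quotient.mk (rightRel H) s :=
  Quotient.sound (rightRel_apply.mpr (by simpa [mul_assoc] using H.inv_mem hk))

lemma mul_inv_out_mem {g : G} {ω : Quotient (rightRel H)}
    (hg : Quotient.mk (rightRel H) g = ω) : g * ω.out⁻¹ ∈ H := by
  simpa using H.inv_mem (rightRel_apply.mp (Quotient.exact (hg.trans ω.out_eq.symm)))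

end QuotientGroup

namespace MonoidAlgebra

section Filter

variable {F G M : Type*} [Ring F]

open Classical in
noncomputable def filter (S : Set G) : F[G] →+ F[G] :=
  coeffAddEquiv.symm.toAddMonoidHom.comp
    ((Finsupp.filterAddHom (· ∈ S)).comp coeffAddEquiv.toAddMonoidHom)

lemma coeff_filter (S : Set G) (x : F[G]) : ⇑(filter S x).coeff = S.indicator x.coeff := by
  classical exact Finsupp.filter_eq_indicator _ _

lemma mem_of_mem_support_filter {S : Set G} {x : F[G]} {g : G}
    (hg : g ∈ (filter S x).coeff.support) : g ∈ S := by
  by_contra h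
  exact Finsupp.mem_support_iff.mp hg (by rw [coeff_filter, Set.indicator_of_notMem h])

lemma sum_filter_fiber {ι : Type*} [Fintype ι] (q : G → ι) (x : F[G]) :
    ∑ i, filter (q ⁻¹' {i}) x = x := by
  classical
  ext g
  simp [coeff_filter, Set.indicator_apply]

variable [Group G] [Monoid M]

lemma filter_single_mul {S : Set G} {h : G} (hS : ∀ s, h * s ∈ S ↔ s ∈ S)
    (r : F) (x : F[G]) :
    filter S (single h r * x) = single h r * filter S x := by
  ext g
  have hg := hS (h⁻¹ * g)
  rw [mul_inv_cancel_left] at hg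
  by_cases g ∈ S <;> simp_all [coeff_filter]

lemma filter_mul_single {S : Set G} {h : G} (hS : ∀ s, s * h ∈ S ↔ s ∈ S)
    (r : F) (x : F[G]) :
    filter S (x * single h r) = filter S x * single h r := by
  ext g
  have hg := hS (g * h⁻¹)
  rw [inv_mul_cancel_right] at hg
  by_cases g ∈ S <;> simp_all [coeff_filter]

lemma filter_mapDomain_mul {S : Set G} (f : M →* G) (hS : ∀ m s, f m * s ∈ S ↔ s ∈ S)
    (b : F[M]) (x : F[G]) :
    filter S (mapDomainRingHom F f b * x) = mapDomainRingHom F f b * filter S x := by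
  induction b using induction_linear with
  | zero => simp
  | add b b' hb hb' => simp only [map_add, add_mul, hb, hb']
  | single m r => simpa using filter_single_mul (hS m) r x

lemma filter_mul_mapDomain {S : Set G} (f : M →* G) (hS : ∀ m s, s * f m ∈ S ↔ s ∈ S)
    (b : F[M]) (x : F[G]) :
    filter S (x * mapDomainRingHom F f b) = filter S x * mapDomainRingHom F f b := by
  induction b using induction_linear with
  | zero => simp
  | add b b' hb hb' => simp only [map_add, mul_add, hb, hb']
  | single m r => simpa using filter_mul_single (hS m) r x

end Filter

section SubgroupTower

variable {F G M : Type*} [Ring F] [Group G] [Monoid M] (H : Subgroup G)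

lemma tmk_mul_eq_of_support_subset (x z w : F[G]) (hz : ↑z.coeff.support ⊆ (H : Set G)) :
    tmk (mapDomainRingHom F H.subtype) (x * z) w =
      tmk (mapDomainRingHom F H.subtype) x (z * w) := by
  have hz' : ↑z.coeff.support ⊆ Set.range H.subtype := by simpa using hz
  rw [← mapDomain_comapDomain hz' H.subtype_injective]
  exact tmk_bal _ x _ w

lemma tmk_eq_lmul_tmk_single_inv {r : G} {y : F[G]}
    (hy : ∀ g ∈ y.coeff.support, g * r⁻¹ ∈ H) (x : F[G]) :
    tmk (mapDomainRingHom F H.subtype) x y =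
      lmul _ (x * y) (tmk _ (single r⁻¹ 1) (single r 1)) := by
  have hsupp : ↑(y * single r⁻¹ (1 : F)).coeff.support ⊆ (H : Set G) := fun s hs => by
    simpa using hy (s * r) (by simpa using hs)
  rw [lmul_mk, mul_assoc, tmk_mul_eq_of_support_subset H x _ _ hsupp, mul_assoc,
    single_mul_single, inv_mul_cancel, one_mul, ← one_def, mul_one]

lemma tCent_tmk_single_inv (f : M →* G) {r : G} (hr : ∀ m, r * f m * r⁻¹ ∈ H) :
    TCent (mapDomainRingHom F H.subtype) (mapDomainRingHom F f)
      (tmk _ (single r⁻¹ 1) (single r 1)) := by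
  intro c
  induction c using induction_linear with
  | zero => simp [lmul_zero, rmul_zero]
  | add c c' hc hc' => rw [map_add, lmul_add_smul, rmul_add_smul, hc, hc']
  | single m d =>
    have hsupp : ↑(single (r * f m * r⁻¹) d).coeff.support ⊆ (H : Set G) :=
      (Finset.coe_subset.mpr Finsupp.support_single_subset).trans (by simpa using hr m)
    calc lmul _ (mapDomainRingHom F f (single m d)) (tmk _ (single r⁻¹ 1) (single r 1))
        = tmk _ (single r⁻¹ 1 * single (r * f m * r⁻¹) d) (single r 1) := by
          simp [single_mul_single, mul_assoc]
      _ = tmk _ (single r⁻¹ 1) (single (r * f m * r⁻¹) d * single r 1) :=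
          tmk_mul_eq_of_support_subset H _ _ _ hsupp
      _ = rmul _ (mapDomainRingHom F f (single m d))
            (tmk _ (single r⁻¹ 1) (single r 1)) := by
          simp [single_mul_single, mul_assoc]

end SubgroupTower

section RightCosets

open QuotientGroup

variable (F : Type*) {G M : Type*} [Ring F] [Group G] [Monoid M] (H : Subgroup G)

noncomputable def rightCosetProj (ω : Quotient (rightRel H)) : F[G] →+ F[G] :=
  filter (Quotient.mk (rightRel H) ⁻¹' {ω})

noncomputable def rightCosetQuasibasis (ω : Quotient (rightRel H)) :
    Tsr (mapDomainRingHom F H.subtype) :=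
  tmk _ (single ω.out⁻¹ 1) (single ω.out 1)

variable {F H}

lemma endBAC_rightCosetProj (f : M →* G) (hf : ∀ m s, s * f m * s⁻¹ ∈ H)
    (ω : Quotient (rightRel H)) :
    EndBAC (mapDomainRingHom F H.subtype) (mapDomainRingHom F f) (rightCosetProj F H ω) :=
  ⟨filter_mapDomain_mul _ fun h s => by simp [mk_rightRel_mul_left h.2],
    fun x c => filter_mul_mapDomain f (fun m s => by simp [mk_rightRel_mul_right (hf m s)]) c x⟩

lemma tCent_rightCosetQuasibasis (f : M →* G) (hf : ∀ m s, s * f m * s⁻¹ ∈ H)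
    (ω : Quotient (rightRel H)) :
    TCent (mapDomainRingHom F H.subtype) (mapDomainRingHom F f) (rightCosetQuasibasis F H ω) :=
  tCent_tmk_single_inv H f fun m => hf m _

lemma tmk_eq_sum_lmul_rightCosetQuasibasis [Fintype (Quotient (rightRel H))] (x y : F[G]) :
    tmk (mapDomainRingHom F H.subtype) x y =
      ∑ ω, lmul _ (x * rightCosetProj F H ω y) (rightCosetQuasibasis F H ω) := by
  conv_lhs => rw [← sum_filter_fiber (Quotient.mk (rightRel H)) y, tmk_sum_right]
  refine Finset.sum_congr rfl fun ω _ => tmk_eq_lmul_tmk_single_inv H (fun g hg => ?_) x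
  have hgω := mem_of_mem_support_filter hg
  exact mul_inv_out_mem hgω

end RightCosets

end MonoidAlgebra

/-- Let `K ≤ H ≤ G` with `[G : H]` finite and the normal closure of
`K` in `G` contained in `H`.  Then for any commutative base ring `F` the tower of
group algebras `F[G] ⊇ F[H] ⊇ F[K]` is right depth three: it admits right depth
three quasibases `γ_i ∈ End_{F[H]} F[G]_{F[K]}` and `u_i ∈ (F[G] ⊗_{F[H]} F[G])^{F[K]}`. -/
theorem groupAlgebra_tower_isRightD3 {G : Type*} [Group G] (H K : Subgroup G)
    (hKH : K ≤ H) (hfin : H.FiniteIndex)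
    (hnc : Subgroup.normalClosure (K : Set G) ≤ H)
    (F : Type*) [CommRing F] :
    ∃ (n : ℕ)
      (γ : Fin n → (MonoidAlgebra F G →+ MonoidAlgebra F G))
      (u : Fin n → Tsr (MonoidAlgebra.mapDomainRingHom F H.subtype)),
      (∀ i, EndBAC (MonoidAlgebra.mapDomainRingHom F H.subtype)
          ((MonoidAlgebra.mapDomainRingHom F H.subtype).comp
            (MonoidAlgebra.mapDomainRingHom F (Subgroup.inclusion hKH))) (γ i)) ∧
      (∀ i, TCent (MonoidAlgebra.mapDomainRingHom F H.subtype)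
          ((MonoidAlgebra.mapDomainRingHom F H.subtype).comp
            (MonoidAlgebra.mapDomainRingHom F (Subgroup.inclusion hKH))) (u i)) ∧
      ∀ x y : MonoidAlgebra F G,
        tmk (MonoidAlgebra.mapDomainRingHom F H.subtype) x y =
          ∑ i, lmul (MonoidAlgebra.mapDomainRingHom F H.subtype) (x * γ i y) (u i) := by
  have hconj : ∀ (k : K) (s : G), s * H.subtype.comp (Subgroup.inclusion hKH) k * s⁻¹ ∈ H :=
    fun k s => hnc <|
      Subgroup.normalClosure_normal.conj_mem _ (Subgroup.subset_normalClosure k.2) s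
  have : Fintype (G ⧸ H) := Fintype.ofFinite _
  let e := (Fintype.equivFin (Quotient (QuotientGroup.rightRel H))).symm
  rw [← MonoidAlgebra.mapDomainRingHom_comp]
  refine ⟨_, MonoidAlgebra.rightCosetProj F H ∘ e, MonoidAlgebra.rightCosetQuasibasis F H ∘ e,
    fun i => MonoidAlgebra.endBAC_rightCosetProj _ hconj _,
    fun i => MonoidAlgebra.tCent_rightCosetQuasibasis _ hconj _, fun x y => ?_⟩
  rw [MonoidAlgebra.tmk_eq_sum_lmul_rightCosetQuasibasis x y]
  exact (e.sum_comp _).symm
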